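/- arXiv:1904.11295 — 4 statements merged into one kernel-verified Lean document; each statement's English description precedes it below -/
import Mathlib

section
/- If h and f are differentiable on an open convex set S and both L·h − f and L·h + f are convex on S, then for all x, y ∈ S we have |f(x) − f(y) − ⟨∇f(y), x − y⟩| ≤ L · D_h(x,y). -/
local notation "⟪" x ", " y "⟫" => @inner ℝ _ _ x y

lemma convex_grad_ineq {E : Type*} [NormedAddCommGroup E] [InnerProductSpace ℝ E] [CompleteSpace E]
    {S : Set E} (hS_conv : Convex ℝ S) {g : E → ℝ} {v x y : E}
    (hg : HasGradientAt g v y) (hconv : ConvexOn ℝ S g) (hx : x ∈ S) (hy : y ∈ S) :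
    ⟪v, x - y⟫ ≤ g x - g y := by
  set φ : ℝ → ℝ := fun t => g (y + t • (x - y)) with hφ
  have hc : HasDerivAt (fun t : ℝ => y + t • (x - y)) (x - y) 0 := by
    simpa using ((hasDerivAt_id (0:ℝ)).smul_const (x - y)).const_add y
  have hder : HasDerivAt φ ⟪v, x - y⟫ 0 := by
    have hg' : HasFDerivAt g ((InnerProductSpace.toDual ℝ E) v) (y + (0:ℝ) • (x - y)) := by
      simpa using hg.hasFDerivAt
    have := hg'.comp_hasDerivAt 0 hc
    exact this
  have hslope : Filter.Tendsto (slope φ 0) (nhdsWithin 0 (Set.Ioi 0)) (nhds ⟪v, x - y⟫) :=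
    (hasDerivAt_iff_tendsto_slope.mp hder).mono_left
      (nhdsWithin_mono _ (by intro t ht; exact ne_of_gt ht))
  refine le_of_tendsto hslope ?_
  filter_upwards [Ioc_mem_nhdsGT one_pos] with t ht
  have ht0 : (0:ℝ) < t := ht.1
  have ht1 : t ≤ 1 := ht.2
  have hineq : g (y + t • (x - y)) ≤ (1 - t) * g y + t * g x := by
    have h2 := hconv.2 hy hx (by linarith : (0:ℝ) ≤ 1 - t) ht0.le (by ring)
    have heq : (1 - t) • y + t • x = y + t • (x - y) := by module
    simpa [heq, smul_eq_mul] using h2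
  have hsl : slope φ 0 t = (φ t - φ 0) / t := by simp [slope_def_field]
  rw [hsl, div_le_iff₀ ht0]
  have hφ0 : φ 0 = g y := by simp [φ]
  have : φ t ≤ (1 - t) * g y + t * g x := hineq
  nlinarith [this, hφ0]

/-- L-smad implies the two-sided descent inequality. -/
theorem lsmad_descent_inequality {d : ℕ} (S : Set (EuclideanSpace ℝ (Fin d)))
    (hS_open : IsOpen S) (hS_conv : Convex ℝ S) (L : ℝ) (hL : 0 < L)
    (f h : EuclideanSpace ℝ (Fin d) → ℝ)
    (f' h' : EuclideanSpace ℝ (Fin d) → EuclideanSpace ℝ (Fin d))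
    (hf_diff : ∀ y ∈ S, HasGradientAt f (f' y) y)
    (hh_diff : ∀ y ∈ S, HasGradientAt h (h' y) y)
    (hconv₁ : ConvexOn ℝ S (fun u => L * h u - f u))
    (hconv₂ : ConvexOn ℝ S (fun u => L * h u + f u)) :
    ∀ x ∈ S, ∀ y ∈ S,
      |f x - f y - ⟪f' y, x - y⟫| ≤ L * (h x - h y - ⟪h' y, x - y⟫) := by
  intro x hx y hy
  have hg1 : HasGradientAt (fun u => L * h u - f u) (L • h' y - f' y) y := by
    rw [hasGradientAt_iff_hasFDerivAt]
    have := ((hh_diff y hy).hasFDerivAt.const_smul L).sub (hf_diff y hy).hasFDerivAt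
    simp only [map_sub, map_smulₛₗ, starRingEnd_apply, star_trivial]
    exact this
  have hg2 : HasGradientAt (fun u => L * h u + f u) (L • h' y + f' y) y := by
    rw [hasGradientAt_iff_hasFDerivAt]
    have := ((hh_diff y hy).hasFDerivAt.const_smul L).add (hf_diff y hy).hasFDerivAt
    simp only [map_add, map_smulₛₗ, starRingEnd_apply, star_trivial]
    exact this
  have h1 := convex_grad_ineq hS_conv hg1 hconv₁ hx hy
  have h2 := convex_grad_ineq hS_conv hg2 hconv₂ hx hy
  rw [inner_sub_left, real_inner_smul_left] at h1
  rw [inner_add_left, real_inner_smul_left] at h2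
  rw [abs_le]
  constructor <;> [linarith; linarith]
end

section
/- Conversely, if f and h are differentiable on an open convex set S and |f(x) − f(y) − ⟨∇f(y), x − y⟩| ≤ L · D_h(x,y) for all x, y ∈ S, then L·h − f and L·h + f are convex on S. -/
/-!
Dropping the absolute value on either side, the hypothesis says that for every `y ∈ S` the affine
function `x ↦ (L h ∓ f) y + ⟪L h' y ∓ f' y, x - y⟫` lies below `L h ∓ f` on `S` and touches it at
`y`. A function admitting such a minorant at every point of a convex set is convex: at
`z = a • x + b • y`, the minorant at `z` evaluated at `x` and `y` and averaged with weights `a`, `b`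
gives the value at `z`.
-/

local notation "⟪" x ", " y "⟫" => @inner ℝ _ _ x y

theorem convexOn_of_forall_add_apply_sub_le {𝕜 E : Type*} [Field 𝕜] [LinearOrder 𝕜]
    [IsStrictOrderedRing 𝕜] [AddCommGroup E] [Module 𝕜 E] {S : Set E} {g : E → 𝕜}
    (φ : E → E →ₗ[𝕜] 𝕜) (hS : Convex 𝕜 S) (hg : ∀ x ∈ S, ∀ y ∈ S, g y + φ y (x - y) ≤ g x) :
    ConvexOn 𝕜 S g := by
  refine ⟨hS, fun x hx y hy a b ha hb hab => ?_⟩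
  set z := a • x + b • y
  have hz : z ∈ S := hS hx hy ha hb hab
  have hsum : a • (x - z) + b • (y - z) = 0 := by
    calc a • (x - z) + b • (y - z) = z - (a + b) • z := by module
      _ = 0 := by rw [hab, one_smul, sub_self]
  have hφ : a * φ z (x - z) + b * φ z (y - z) = 0 := by
    simpa only [map_add, map_smul, smul_eq_mul, map_zero] using congrArg (φ z) hsum
  have hx' := mul_le_mul_of_nonneg_left (hg x hx z hz) ha
  have hy' := mul_le_mul_of_nonneg_left (hg y hy z hz) hb
  linear_combination hx' + hy' - hφ - g z * hab

theorem convexOn_mul_sub_of_abs_le_bregman {E : Type*} [NormedAddCommGroup E]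
    [InnerProductSpace ℝ E] {S : Set E} (hS : Convex ℝ S) (L : ℝ) {f h : E → ℝ} (f' h' : E → E)
    (hineq : ∀ x ∈ S, ∀ y ∈ S, |f x - f y - ⟪f' y, x - y⟫| ≤ L * (h x - h y - ⟪h' y, x - y⟫)) :
    ConvexOn ℝ S (fun u => L * h u - f u) := by
  refine convexOn_of_forall_add_apply_sub_le (fun y => innerₗ E (L • h' y - f' y)) hS ?_
  intro x hx y hy
  have hle := (le_abs_self _).trans (hineq x hx y hy)
  simp only [innerₗ_apply_apply, inner_sub_left, real_inner_smul_left]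
  linarith

theorem descent_inequality_lsmad_general {d : ℕ} (S : Set (EuclideanSpace ℝ (Fin d)))
    (hS_conv : Convex ℝ S) (L : ℝ)
    (f h : EuclideanSpace ℝ (Fin d) → ℝ)
    (f' h' : EuclideanSpace ℝ (Fin d) → EuclideanSpace ℝ (Fin d))
    (hineq : ∀ x ∈ S, ∀ y ∈ S,
      |f x - f y - ⟪f' y, x - y⟫| ≤ L * (h x - h y - ⟪h' y, x - y⟫)) :
    ConvexOn ℝ S (fun u => L * h u - f u) ∧ ConvexOn ℝ S (fun u => L * h u + f u) := by
  refine ⟨convexOn_mul_sub_of_abs_le_bregman hS_conv L f' h' hineq, ?_⟩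
  have hineq_neg : ∀ x ∈ S, ∀ y ∈ S,
      |-f x - -f y - ⟪-f' y, x - y⟫| ≤ L * (h x - h y - ⟪h' y, x - y⟫) := by
    intro x hx y hy
    rw [inner_neg_left, ← abs_neg]
    convert hineq x hx y hy using 2
    ring
  simpa only [sub_neg_eq_add] using
    convexOn_mul_sub_of_abs_le_bregman hS_conv L (f := fun u => -f u) (fun u => -f' u) h' hineq_neg

/-- The descent-type inequality implies the convexity of `L·h − f` and `L·h + f`. -/
theorem descent_inequality_lsmad {d : ℕ} (S : Set (EuclideanSpace ℝ (Fin d)))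
    (hS_open : IsOpen S) (hS_conv : Convex ℝ S) (L : ℝ) (hL : 0 < L)
    (f h : EuclideanSpace ℝ (Fin d) → ℝ)
    (f' h' : EuclideanSpace ℝ (Fin d) → EuclideanSpace ℝ (Fin d))
    (hf_diff : ∀ y ∈ S, HasGradientAt f (f' y) y)
    (hh_diff : ∀ y ∈ S, HasGradientAt h (h' y) y)
    (hineq : ∀ x ∈ S, ∀ y ∈ S,
      |f x - f y - ⟪f' y, x - y⟫| ≤ L * (h x - h y - ⟪h' y, x - y⟫)) :
    ConvexOn ℝ S (fun u => L * h u - f u) ∧ ConvexOn ℝ S (fun u => L * h u + f u) :=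
  descent_inequality_lsmad_general S hS_conv L f h f' h' hineq
end

section
/- Descent-type inequality for BPGe (Lemma 4.1(i)): let x^{k+1} be a minimizer of u ↦ g(u) + ⟨∇f(y^k), u − y^k⟩ + λ_k^{-1} D_h(u, y^k), where g is convex, (f,h) is L-smad and f is μ-relative weakly convex to h. Then for every x ∈ int dom h, Ψ(x^{k+1}) − Ψ(x) ≤ (λ_k^{-1} + μ) D_h(x, y^k) − λ_k^{-1} D_h(x, x^{k+1}) − (λ_k^{-1} − L) D_h(x^{k+1}, y^k). -/
local notation "⟪" x ", " y "⟫" => @inner ℝ _ _ x y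

lemma my_slope_le {ψ : ℝ → ℝ} {dd c : ℝ} (hd : HasDerivAt ψ dd 0)
    (hc : ∀ t ∈ Set.Ioc (0:ℝ) 1, ψ t - ψ 0 ≤ t * c) : dd ≤ c := by
  have h1 : Filter.Tendsto (slope ψ 0) (nhdsWithin 0 (Set.Ioi 0)) (nhds dd) :=
    (hasDerivAt_iff_tendsto_slope.mp hd).mono_left
      (nhdsWithin_mono _ (fun t ht => ne_of_gt ht))
  refine le_of_tendsto h1 ?_
  filter_upwards [Ioc_mem_nhdsGT_of_mem (by norm_num : (0:ℝ) ∈ Set.Ico (0:ℝ) 1)] with t ht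
  have h2 := hc t ht
  rw [slope_def_field, div_le_iff₀ (by linarith [ht.1] : (0:ℝ) < t - 0)]
  simp only [sub_zero] at *
  linarith

lemma my_line_deriv {n : ℕ} (F : EuclideanSpace ℝ (Fin n) → ℝ)
    (G b v : EuclideanSpace ℝ (Fin n)) (hF : HasGradientAt F G b) :
    HasDerivAt (fun t : ℝ => F (b + t • v)) (⟪G, v⟫) 0 := by
  have hline : HasDerivAt (fun t : ℝ => b + t • v) v 0 := by
    simpa using ((hasDerivAt_id (0:ℝ)).smul_const v).const_add b
  have hF' : HasFDerivAt F (InnerProductSpace.toDual ℝ _ G) (b + (0:ℝ) • v) := by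
    simpa using hF.hasFDerivAt
  have hc := hF'.comp_hasDerivAt 0 hline
  simp at hc
  exact hc

lemma my_grad_ineq {n : ℕ} (F : EuclideanSpace ℝ (Fin n) → ℝ)
    (F' : EuclideanSpace ℝ (Fin n) → EuclideanSpace ℝ (Fin n))
    (hdiff : ∀ y, HasGradientAt F (F' y) y) (hconv : ConvexOn ℝ Set.univ F)
    (a b : EuclideanSpace ℝ (Fin n)) : ⟪F' b, a - b⟫ ≤ F a - F b := by
  have hder := my_line_deriv F (F' b) b (a - b) (hdiff b)
  refine my_slope_le hder ?_
  intro t ht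
  have key : F (b + t • (a - b)) ≤ (1 - t) * F b + t * F a := by
    have heq : b + t • (a - b) = (1 - t) • b + t • a := by module
    rw [heq]
    exact hconv.2 (Set.mem_univ b) (Set.mem_univ a) (by linarith [ht.2]) (le_of_lt ht.1)
      (by ring)
  simp only [zero_smul, add_zero] at *
  linarith

/-- Descent-type inequality for BPGe (Lemma 4.1(i)). `D a b` denotes the Bregman
distance `h a − h b − ⟪∇h b, a − b⟫`. -/
theorem bpge_descent_lemma {d : ℕ} (L μ lam : ℝ) (hL : 0 < L) (hμ : 0 ≤ μ)
    (hlam : 0 < lam) (hlamL : lam ≤ 1 / L)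
    (f g h : EuclideanSpace ℝ (Fin d) → ℝ)
    (f' h' : EuclideanSpace ℝ (Fin d) → EuclideanSpace ℝ (Fin d))
    (hf_diff : ∀ y, HasGradientAt f (f' y) y)
    (hh_diff : ∀ y, HasGradientAt h (h' y) y)
    (hg_conv : ConvexOn ℝ Set.univ g)
    (D : EuclideanSpace ℝ (Fin d) → EuclideanSpace ℝ (Fin d) → ℝ)
    (hD : ∀ a b, D a b = h a - h b - ⟪h' b, a - b⟫)
    (hsmad : ∀ a b, |f a - f b - ⟪f' b, a - b⟫| ≤ L * D a b)
    (hwc : ConvexOn ℝ Set.univ (fun u => f u + μ * h u))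
    (yk xkp1 : EuclideanSpace ℝ (Fin d))
    (hmin : ∀ u, g xkp1 + ⟪f' yk, xkp1 - yk⟫ + lam⁻¹ * D xkp1 yk
                ≤ g u + ⟪f' yk, u - yk⟫ + lam⁻¹ * D u yk) :
    ∀ x, (f xkp1 + g xkp1) - (f x + g x)
        ≤ (lam⁻¹ + μ) * D x yk - lam⁻¹ * D x xkp1 - (lam⁻¹ - L) * D xkp1 yk := by
  intro x
  -- gradient of f + μ h
  have hgrad : ∀ y, HasGradientAt (fun u => f u + μ * h u) (f' y + μ • h' y) y := by
    intro y
    rw [hasGradientAt_iff_hasFDerivAt]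
    have h1 := (hf_diff y).hasFDerivAt
    have h2 := ((hh_diff y).hasFDerivAt).const_smul μ
    have h3 := h1.add h2
    have : InnerProductSpace.toDual ℝ (EuclideanSpace ℝ (Fin d)) (f' y + μ • h' y)
        = InnerProductSpace.toDual ℝ _ (f' y) + μ • InnerProductSpace.toDual ℝ _ (h' y) := by
      simp [map_add, map_smul]
    rw [this]
    exact h3.congr_fderiv rfl
  -- subgradient-type inequality from minimality (limit argument)
  have hstar : 0 ≤ (g x - g xkp1 + ⟪f' yk, x - xkp1⟫ - lam⁻¹ * ⟪h' yk, x - xkp1⟫)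
      + lam⁻¹ * ⟪h' xkp1, x - xkp1⟫ := by
    have hder : HasDerivAt
        (fun t : ℝ => -(t * (g x - g xkp1 + ⟪f' yk, x - xkp1⟫ - lam⁻¹ * ⟪h' yk, x - xkp1⟫)
              + lam⁻¹ * (h (xkp1 + t • (x - xkp1)) - h xkp1)))
        (-((g x - g xkp1 + ⟪f' yk, x - xkp1⟫ - lam⁻¹ * ⟪h' yk, x - xkp1⟫)
              + lam⁻¹ * ⟪h' xkp1, x - xkp1⟫)) 0 := by
      have h1 : HasDerivAt
          (fun t : ℝ => t * (g x - g xkp1 + ⟪f' yk, x - xkp1⟫ - lam⁻¹ * ⟪h' yk, x - xkp1⟫))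
          (g x - g xkp1 + ⟪f' yk, x - xkp1⟫ - lam⁻¹ * ⟪h' yk, x - xkp1⟫) 0 := by
        simpa using (hasDerivAt_id (0:ℝ)).mul_const _
      have h2 := ((my_line_deriv h (h' xkp1) xkp1 (x - xkp1) (hh_diff xkp1)).sub_const
        (h xkp1)).const_mul lam⁻¹
      exact (h1.add h2).neg
    have hle := my_slope_le hder (c := 0) ?_
    · linarith
    · intro t ht
      have hu : g xkp1 + ⟪f' yk, xkp1 - yk⟫ + lam⁻¹ * D xkp1 yk
          ≤ g (xkp1 + t • (x - xkp1)) + ⟪f' yk, (xkp1 + t • (x - xkp1)) - yk⟫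
            + lam⁻¹ * D (xkp1 + t • (x - xkp1)) yk := hmin _
      have hgc : g (xkp1 + t • (x - xkp1)) ≤ (1 - t) * g xkp1 + t * g x := by
        have heq : xkp1 + t • (x - xkp1) = (1 - t) • xkp1 + t • x := by module
        rw [heq]
        exact hg_conv.2 (Set.mem_univ xkp1) (Set.mem_univ x) (by linarith [ht.2])
          (le_of_lt ht.1) (by ring)
      have hvec : (xkp1 + t • (x - xkp1)) - yk = (xkp1 - yk) + t • (x - xkp1) := by module
      have e1 : ⟪f' yk, (xkp1 + t • (x - xkp1)) - yk⟫
          = ⟪f' yk, xkp1 - yk⟫ + t * ⟪f' yk, x - xkp1⟫ := by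
        rw [hvec, inner_add_right, real_inner_smul_right]
      have e2 : lam⁻¹ * D (xkp1 + t • (x - xkp1)) yk
          = lam⁻¹ * D xkp1 yk + lam⁻¹ * (h (xkp1 + t • (x - xkp1)) - h xkp1)
            - t * (lam⁻¹ * ⟪h' yk, x - xkp1⟫) := by
        rw [hD, hD, hvec, inner_add_right, real_inner_smul_right]; ring
      rw [e1, e2] at hu
      simp only [zero_smul, add_zero, zero_mul, sub_self, mul_zero, neg_zero, zero_add,
        sub_zero] at *
      nlinarith [hu, hgc]
  -- smad upper bound at xkp1
  have hA : f xkp1 - f yk - ⟪f' yk, xkp1 - yk⟫ ≤ L * D xkp1 yk := (abs_le.mp (hsmad xkp1 yk)).2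
  -- weak convexity gradient inequality
  have hB : ⟪f' yk, x - yk⟫ + μ * ⟪h' yk, x - yk⟫ ≤ (f x + μ * h x) - (f yk + μ * h yk) := by
    have := my_grad_ineq (fun u => f u + μ * h u) (fun y => f' y + μ • h' y) hgrad hwc x yk
    rwa [inner_add_left, real_inner_smul_left] at this
  -- splitting identities
  have hvsplit : x - yk = (x - xkp1) + (xkp1 - yk) := by module
  have hsplit_f : ⟪f' yk, x - yk⟫ = ⟪f' yk, x - xkp1⟫ + ⟪f' yk, xkp1 - yk⟫ := by
    rw [hvsplit, inner_add_right]
  have hsplit_h : ⟪h' yk, x - yk⟫ = ⟪h' yk, x - xkp1⟫ + ⟪h' yk, xkp1 - yk⟫ := by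
    rw [hvsplit, inner_add_right]
  have hsplit_hμ : μ * ⟪h' yk, x - yk⟫
      = μ * ⟪h' yk, x - xkp1⟫ + μ * ⟪h' yk, xkp1 - yk⟫ := by rw [hsplit_h]; ring
  have hsplit_hlam : lam⁻¹ * ⟪h' yk, x - yk⟫
      = lam⁻¹ * ⟪h' yk, x - xkp1⟫ + lam⁻¹ * ⟪h' yk, xkp1 - yk⟫ := by rw [hsplit_h]; ring
  simp only [hD] at hA ⊢
  nlinarith [hstar, hA, hB, hsplit_f, hsplit_hμ, hsplit_hlam]
end

section
/- Sufficient decrease of the Lyapunov sequence (Lemma 4.1(ii)): under the BPGe iteration with line search condition D_h(x^k, y^k) ≤ ρ C_k D_h(x^{k-1}, x^k) where C_k = λ_k^{-1}/(λ_k^{-1} + μ), the sequence H_{k,M} := Ψ(x^k) + M D_h(x^{k-1}, x^k) satisfies H_{k+1,M} − H_{k,M} ≤ (M − λ_k^{-1}) D_h(x^k, x^{k+1}) − (M − ρ λ_k^{-1}) D_h(x^{k-1}, x^k) for every k. -/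
local notation "⟪" x ", " y "⟫" => @inner ℝ _ _ x y

section Helpers

variable {d : ℕ}

/-- Derivative of a function along a line, from its gradient. -/
lemma hasDerivAt_line (φ : EuclideanSpace ℝ (Fin d) → ℝ)
    (φ' x v : EuclideanSpace ℝ (Fin d)) (hd : HasGradientAt φ φ' x) :
    HasDerivAt (fun t : ℝ => φ (x + t • v)) ⟪φ', v⟫ 0 := by
  have hline : HasDerivAt (fun t : ℝ => x + t • v) v 0 := by
    simpa using ((hasDerivAt_id (0:ℝ)).smul_const v).const_add x
  have hF := hd.hasFDerivAt
  have hx0 : x + (0:ℝ) • v = x := by simp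
  have := (hx0 ▸ hF).comp_hasDerivAt 0 hline
  simpa [Function.comp_def] using this

lemma deriv_le_of_slope (q : ℝ → ℝ) (q' C : ℝ) (hq : HasDerivAt q q' 0)
    (hs : ∀ t ∈ Set.Ioc (0:ℝ) 1, (q t - q 0) / t ≤ C) : q' ≤ C := by
  have ht : Filter.Tendsto (slope q 0) (nhdsWithin 0 (Set.Ioi 0)) (nhds q') :=
    (hasDerivAt_iff_tendsto_slope.mp hq).mono_left
      (nhdsWithin_mono _ (fun t ht => by simpa using ne_of_gt ht))
  refine le_of_tendsto ht ?_
  filter_upwards [Ioc_mem_nhdsGT_of_mem (by constructor <;> norm_num : (0:ℝ) ∈ Set.Ico 0 1)]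
    with t ht'
  simpa [slope_def_field, div_eq_inv_mul] using hs t ht'

lemma deriv_ge_of_slope (q : ℝ → ℝ) (q' C : ℝ) (hq : HasDerivAt q q' 0)
    (hs : ∀ t ∈ Set.Ioc (0:ℝ) 1, C ≤ (q t - q 0) / t) : C ≤ q' := by
  have := deriv_le_of_slope (fun t => -(q t)) (-q') (-C) hq.neg ?_
  · linarith
  · intro t ht
    have := hs t ht
    have h1 : (-(q t) - -(q 0)) / t = -((q t - q 0) / t) := by ring
    rw [h1]; linarith

/-- Gradient inequality for convex functions. -/
lemma grad_ineq (φ : EuclideanSpace ℝ (Fin d) → ℝ) (φ' : EuclideanSpace ℝ (Fin d))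
    (hconv : ConvexOn ℝ Set.univ φ) (b : EuclideanSpace ℝ (Fin d))
    (hd : HasGradientAt φ φ' b) (a : EuclideanSpace ℝ (Fin d)) :
    φ b + ⟪φ', a - b⟫ ≤ φ a := by
  have hq : HasDerivAt (fun t : ℝ => φ (b + t • (a - b))) ⟪φ', a - b⟫ 0 :=
    hasDerivAt_line φ φ' b (a - b) hd
  have key : ⟪φ', a - b⟫ ≤ φ a - φ b := by
    refine deriv_le_of_slope _ _ _ hq ?_
    intro t ht
    have hcomb : φ (b + t • (a - b)) ≤ (1 - t) * φ b + t * φ a := by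
      have := hconv.2 (Set.mem_univ a) (Set.mem_univ b) (le_of_lt ht.1)
        (by linarith [ht.2] : (0:ℝ) ≤ 1 - t) (by ring)
      have hpt : t • a + (1 - t) • b = b + t • (a - b) := by
        module
      rw [hpt] at this
      simp only [smul_eq_mul] at this
      linarith
    rw [div_le_iff₀ ht.1]
    have h0 : φ (b + (0:ℝ) • (a - b)) = φ b := by simp
    rw [h0]
    nlinarith [ht.1]
  linarith

end Helpers

/-- Sufficient decrease of the Lyapunov sequence `H_{k,M} = Ψ(x^k) + M·D(x^{k-1},x^k)`
(Lemma 4.1(ii)). `D a b` denotes the Bregman distance `h a − h b − ⟪∇h b, a − b⟫`. -/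
theorem bpge_lyapunov_decrease {d : ℕ} (L μ lam M ρ : ℝ) (hL : 0 < L) (hμ : 0 ≤ μ)
    (hlam : 0 < lam) (hlamL : lam ≤ 1 / L) (hρ : 0 < ρ) (hρ1 : ρ < 1)
    (f g h : EuclideanSpace ℝ (Fin d) → ℝ)
    (f' h' : EuclideanSpace ℝ (Fin d) → EuclideanSpace ℝ (Fin d))
    (hf_diff : ∀ y, HasGradientAt f (f' y) y)
    (hh_diff : ∀ y, HasGradientAt h (h' y) y)
    (hg_conv : ConvexOn ℝ Set.univ g)
    (hh_conv : ConvexOn ℝ Set.univ h)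
    (D : EuclideanSpace ℝ (Fin d) → EuclideanSpace ℝ (Fin d) → ℝ)
    (hD : ∀ a b, D a b = h a - h b - ⟪h' b, a - b⟫)
    (hsmad : ∀ a b, |f a - f b - ⟪f' b, a - b⟫| ≤ L * D a b)
    (hwc : ConvexOn ℝ Set.univ (fun u => f u + μ * h u))
    (xkm1 xk yk xkp1 : EuclideanSpace ℝ (Fin d))
    (hls : D xk yk ≤ ρ * (lam⁻¹ / (lam⁻¹ + μ)) * D xkm1 xk)
    (hmin : ∀ u, g xkp1 + ⟪f' yk, xkp1 - yk⟫ + lam⁻¹ * D xkp1 yk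
                ≤ g u + ⟪f' yk, u - yk⟫ + lam⁻¹ * D u yk) :
    (f xkp1 + g xkp1 + M * D xk xkp1) - (f xk + g xk + M * D xkm1 xk)
      ≤ (M - lam⁻¹) * D xk xkp1 - (M - ρ * lam⁻¹) * D xkm1 xk := by
  set c : ℝ := lam⁻¹ with hc
  have hc0 : 0 < c := inv_pos.mpr hlam
  have hcL : L ≤ c := by
    rw [hc, ← one_div]
    rw [le_div_iff₀ hL] at hlamL
    rw [le_div_iff₀ hlam]
    linarith
  -- D is nonnegative
  have hDnn : ∀ a b, 0 ≤ D a b := by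
    intro a b
    rw [hD a b]
    have := grad_ineq h (h' b) hh_conv b (hh_diff b) a
    linarith
  -- (1) smad upper bound
  have h1 : f xkp1 ≤ f yk + ⟪f' yk, xkp1 - yk⟫ + L * D xkp1 yk := by
    have := abs_le.mp (hsmad xkp1 yk)
    linarith [this.2]
  -- (2) L ≤ c on nonneg D
  have h2 : L * D xkp1 yk ≤ c * D xkp1 yk :=
    mul_le_mul_of_nonneg_right hcL (hDnn xkp1 yk)
  -- (3) strengthened prox inequality at u = xk
  have h3 : g xkp1 + ⟪f' yk, xkp1 - yk⟫ + c * D xkp1 yk + c * D xk xkp1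
      ≤ g xk + ⟪f' yk, xk - yk⟫ + c * D xk yk := by
    -- key star inequality via limit argument
    set v := xk - xkp1 with hv
    have hq : HasDerivAt (fun t : ℝ => h (xkp1 + t • v)) ⟪h' xkp1, v⟫ 0 :=
      hasDerivAt_line h (h' xkp1) xkp1 v (hh_diff xkp1)
    set A : ℝ := g xk - g xkp1 + ⟪f' yk, v⟫ - c * ⟪h' yk, v⟫ with hA
    have hstar : -A / c ≤ ⟪h' xkp1, v⟫ := by
      refine deriv_ge_of_slope _ _ _ hq ?_
      intro t ht
      set xt := xkp1 + t • v with hxt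
      have hmin_t := hmin xt
      have hgt : g xt ≤ (1 - t) * g xkp1 + t * g xk := by
        have := hg_conv.2 (Set.mem_univ xk) (Set.mem_univ xkp1) (le_of_lt ht.1)
          (by linarith [ht.2] : (0:ℝ) ≤ 1 - t) (by ring)
        have hpt : t • xk + (1 - t) • xkp1 = xkp1 + t • v := by
          rw [hv]; module
        rw [hpt] at this
        simp only [smul_eq_mul] at this
        rw [hxt]
        linarith
      -- linear terms
      have hinner1 : ⟪f' yk, xt - yk⟫ = ⟪f' yk, xkp1 - yk⟫ + t * ⟪f' yk, v⟫ := by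
        have : xt - yk = (xkp1 - yk) + t • v := by rw [hxt]; module
        rw [this, inner_add_right, real_inner_smul_right]
      have hinner2 : ⟪h' yk, xt - yk⟫ = ⟪h' yk, xkp1 - yk⟫ + t * ⟪h' yk, v⟫ := by
        have : xt - yk = (xkp1 - yk) + t • v := by rw [hxt]; module
        rw [this, inner_add_right, real_inner_smul_right]
      have hDxt : D xt yk = h xt - h yk - ⟪h' yk, xt - yk⟫ := hD xt yk
      have hDxp : D xkp1 yk = h xkp1 - h yk - ⟪h' yk, xkp1 - yk⟫ := hD xkp1 yk
      rw [hDxt, hDxp, hinner1, hinner2] at hmin_t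
      -- derive slope bound
      rw [div_le_div_iff₀ hc0 ht.1]
      have ht0 : h (xkp1 + (0:ℝ) • v) = h xkp1 := by simp
      rw [ht0]
      have hA' : 0 ≤ t * A + c * (h xt - h xkp1) := by
        rw [hA]
        nlinarith [hmin_t, hgt]
      nlinarith [hA']
    -- unfold and conclude
    have hDk : D xk yk = h xk - h yk - ⟪h' yk, xk - yk⟫ := hD xk yk
    have hDp : D xkp1 yk = h xkp1 - h yk - ⟪h' yk, xkp1 - yk⟫ := hD xkp1 yk
    have hDkk : D xk xkp1 = h xk - h xkp1 - ⟪h' xkp1, xk - xkp1⟫ := hD xk xkp1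
    have hsplit1 : ⟪f' yk, xk - yk⟫ = ⟪f' yk, xkp1 - yk⟫ + ⟪f' yk, v⟫ := by
      rw [hv, ← inner_add_right]; congr 1; module
    have hsplit2 : ⟪h' yk, xk - yk⟫ = ⟪h' yk, xkp1 - yk⟫ + ⟪h' yk, v⟫ := by
      rw [hv, ← inner_add_right]; congr 1; module
    have hstar' : 0 ≤ A + c * ⟪h' xkp1, v⟫ := by
      rw [div_le_iff₀ hc0] at hstar
      linarith [hstar]
    rw [hDk, hDp, hDkk, hsplit1, hsplit2]
    have : ⟪h' xkp1, xk - xkp1⟫ = ⟪h' xkp1, v⟫ := by rw [hv]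
    rw [this]
    rw [hA] at hstar'
    ring_nf
    ring_nf at hstar'
    linarith
  -- (4) relative weak convexity
  have h4 : f yk + ⟪f' yk, xk - yk⟫ ≤ f xk + μ * D xk yk := by
    have hgrad : HasGradientAt (fun u => f u + μ * h u) (f' yk + μ • h' yk) yk := by
      have hF := (hf_diff yk).hasFDerivAt
      have hH := (hh_diff yk).hasFDerivAt
      have hsum : HasFDerivAt (fun u => f u + μ * h u)
          ((InnerProductSpace.toDual ℝ _) (f' yk) + μ • (InnerProductSpace.toDual ℝ _) (h' yk)) yk := by
        exact hF.add (hH.const_smul μ)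
      rw [hasGradientAt_iff_hasFDerivAt, map_add, map_smul]
      exact hsum
    have := grad_ineq (fun u => f u + μ * h u) (f' yk + μ • h' yk) hwc yk hgrad xk
    simp only [inner_add_left, real_inner_smul_left] at this
    have hDk : D xk yk = h xk - h yk - ⟪h' yk, xk - yk⟫ := hD xk yk
    rw [hDk]
    linarith
  -- (5) line search
  have h5 : (c + μ) * D xk yk ≤ ρ * c * D xkm1 xk := by
    have hcμ : 0 < c + μ := by linarith
    have := mul_le_mul_of_nonneg_left hls (le_of_lt hcμ)
    have heq : (c + μ) * (ρ * (c / (c + μ)) * D xkm1 xk) = ρ * c * D xkm1 xk := by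
      field_simp
    rw [hc] at heq ⊢
    linarith [heq ▸ this]
  linarith
end
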